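/- Let n ≥ 1 and N = 2^n, and let G_n = (X_1,…,X_N) be a Gray code of length-n binary strings. Then every N×N complex unitary matrix U, with rows and columns indexed by length-n binary strings, can be written as a product of at most N(N−1)/2 G_n-unitary matrices, i.e., U = A_1 ⋯ A_m with m ≤ N(N−1)/2 where each A_i is a unitary matrix agreeing with the identity in every entry outside the 2×2 principal submatrix with row and column indices X_{k_i} and X_{k_i+1}, for some k_i ∈ {1,…,N−1}. In particular, each factor A_i differs from the identity only in rows and columns indexed by two binary strings that differ in exactly one position. -/

import Mathlib

/-- Two length-`n` binary strings differ in exactly one position. -/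
def DiffersInOnePos {n : ℕ} (x y : Fin n → Bool) : Prop :=
  (Finset.univ.filter fun j => x j ≠ y j).card = 1

/-- `A` agrees with the identity matrix in every entry outside the 2×2 principal
submatrix with row and column indices `p` and `q` (a "two-level" pattern). -/
def IsTwoLevelOn {ι R : Type*} [DecidableEq ι] [Zero R] [One R]
    (A : Matrix ι ι R) (p q : ι) : Prop :=
  ∀ i j, (i ≠ p ∧ i ≠ q) ∨ (j ≠ p ∧ j ≠ q) → A i j = if i = j then 1 else 0

/-!
Reindexing by the Gray code turns the problem into one on `Fin N`, where consecutive indices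
`k, k + 1` are the adjacent pairs. There a unitary matrix is reduced one column at a time, by
Givens rotations: in column `r` the entries below the diagonal are cleared from the bottom up by
rotations on `(k, k + 1)`, `k = N - 2, …, r`. Each rotation leaves a nonnegative real number in
position `k`, so the diagonal entry ends up real, nonnegative and of modulus one, i.e. equal to
`1`, and unitarity then clears row `r` as well. Column `r` costs `N - 1 - r` rotations, and the
last `2 × 2` block is itself a single factor, so at most `(N - 1) + ⋯ + 1 = N(N - 1)/2` factors
are needed.
-/

open Matrix
open scoped Pointwise

open ComplexConjugate in
theorem exists_unitary_mulVec_eq (a b : ℂ) :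
    ∃ B ∈ unitaryGroup (Fin 2) ℂ,
      B *ᵥ ![(√(Complex.normSq a + Complex.normSq b) : ℂ), 0] = ![a, b] := by
  have hnonneg := add_nonneg (Complex.normSq_nonneg a) (Complex.normSq_nonneg b)
  set l := √(Complex.normSq a + Complex.normSq b)
  by_cases hl0 : l = 0
  · rw [Real.sqrt_eq_zero hnonneg] at hl0
    obtain ⟨rfl, rfl⟩ : a = 0 ∧ b = 0 := by
      constructor <;> apply Complex.normSq_eq_zero.mp <;>
        linarith [Complex.normSq_nonneg a, Complex.normSq_nonneg b]
    exact ⟨1, one_mem _, by simp [l]⟩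
  · have hl : (l : ℂ) * l = a * conj a + b * conj b := by
      rw [← Complex.ofReal_mul, Real.mul_self_sqrt hnonneg]
      simp [Complex.mul_conj]
    have hl0 : (l : ℂ) ≠ 0 := by exact_mod_cast hl0
    refine ⟨(l : ℂ)⁻¹ • !![a, -conj b; b, conj a], ?_, ?_⟩
    · rw [mem_unitaryGroup_iff]
      ext i j
      fin_cases i <;> fin_cases j <;> simp [mul_apply, Fin.sum_univ_two] <;> field_simp <;>
        first | ring1 | linear_combination -hl
    · ext i
      fin_cases i <;> simp [hl0]

section TwoLevel

variable {ι κ R : Type*} [DecidableEq ι] [DecidableEq κ]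

theorem IsTwoLevelOn.reindex [Zero R] [One R] {A : Matrix ι ι R} {p q : ι}
    (h : IsTwoLevelOn A p q) (e : ι ≃ κ) : IsTwoLevelOn (reindex e e A) (e p) (e q) := by
  intro i j hij
  simp only [← e.symm_apply_eq.not] at hij
  simpa [reindex_apply] using h (e.symm i) (e.symm j) hij

variable [Fintype ι]

def twoLevel [Zero R] [One R] (p q : ι) (B : Matrix (Fin 2) (Fin 2) R) : Matrix ι ι R :=
  of fun i j =>
    if i = p then (if j = p then B 0 0 else if j = q then B 0 1 else 0)
    else if i = q then (if j = p then B 1 0 else if j = q then B 1 1 else 0)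
    else (1 : Matrix ι ι R) i j

omit [Fintype ι] in
theorem isTwoLevelOn_twoLevel [Zero R] [One R] (p q : ι) (B : Matrix (Fin 2) (Fin 2) R) :
    IsTwoLevelOn (twoLevel p q B) p q := by
  intro i j hij
  simp only [twoLevel, of_apply, one_apply]
  split_ifs <;> simp_all

theorem twoLevel_mulVec [NonAssocSemiring R] {p q : ι} (hpq : p ≠ q)
    (B : Matrix (Fin 2) (Fin 2) R) (v : ι → R) :
    twoLevel p q B *ᵥ v = fun i =>
      if i = p then B 0 0 * v p + B 0 1 * v q
      else if i = q then B 1 0 * v p + B 1 1 * v q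
      else v i := by
  ext i
  by_cases hi : i = p ∨ i = q
  · rw [mulVec, dotProduct, Fintype.sum_eq_add p q hpq]
    · simp only [twoLevel, of_apply]
      split_ifs <;> simp_all
    · intro k ⟨hkp, hkq⟩
      simp only [twoLevel, of_apply]
      split_ifs <;> simp_all
  · push Not at hi
    have hrow : (fun k => twoLevel p q B i k) = fun k => (1 : Matrix ι ι R) i k := by
      ext k; simp [twoLevel, hi.1, hi.2]
    change (fun k => twoLevel p q B i k) ⬝ᵥ v = _
    rw [hrow, if_neg hi.1, if_neg hi.2]
    exact congrFun (one_mulVec v) i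

theorem twoLevel_mul_twoLevel [NonAssocSemiring R] {p q : ι} (hpq : p ≠ q)
    (B C : Matrix (Fin 2) (Fin 2) R) :
    twoLevel p q B * twoLevel p q C = twoLevel p q (B * C) := by
  ext i j
  change (twoLevel p q B *ᵥ fun k => twoLevel p q C k j) i = _
  rw [twoLevel_mulVec hpq]
  simp only [twoLevel, of_apply, one_apply, mul_apply, Fin.sum_univ_two]
  split_ifs <;> simp_all

omit [Fintype ι] in
theorem twoLevel_one [Zero R] [One R] (p q : ι) :
    twoLevel p q (1 : Matrix (Fin 2) (Fin 2) R) = 1 := by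
  ext i j
  simp only [twoLevel, of_apply, one_apply]
  split_ifs <;> simp_all

omit [Fintype ι] in
theorem conjTranspose_twoLevel [Semiring R] [StarRing R] (p q : ι)
    (B : Matrix (Fin 2) (Fin 2) R) : (twoLevel p q B)ᴴ = twoLevel p q Bᴴ := by
  ext i j
  simp only [twoLevel, conjTranspose_apply, of_apply, one_apply]
  split_ifs <;> subst_vars <;> simp_all

theorem twoLevel_mem_unitaryGroup [CommRing R] [StarRing R] {p q : ι} (hpq : p ≠ q)
    {B : Matrix (Fin 2) (Fin 2) R} (hB : B ∈ unitaryGroup (Fin 2) R) :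
    twoLevel p q B ∈ unitaryGroup ι R := by
  rw [mem_unitaryGroup_iff, star_eq_conjTranspose, conjTranspose_twoLevel,
    twoLevel_mul_twoLevel hpq, ← star_eq_conjTranspose, mem_unitaryGroup_iff.mp hB, twoLevel_one]

theorem exists_twoLevel_mulVec_update_eq {p q : ι} (hpq : p ≠ q) (v : ι → ℂ) :
    ∃ G ∈ unitaryGroup ι ℂ, IsTwoLevelOn G p q ∧
      G *ᵥ Function.update (Function.update v p
        (√(Complex.normSq (v p) + Complex.normSq (v q)) : ℂ)) q 0 = v := by
  obtain ⟨B, hB, hBv⟩ := exists_unitary_mulVec_eq (v p) (v q)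
  have hp := congrFun hBv 0
  have hq := congrFun hBv 1
  simp only [mulVec, dotProduct, Fin.sum_univ_two] at hp hq
  refine ⟨twoLevel p q B, twoLevel_mem_unitaryGroup hpq hB, isTwoLevelOn_twoLevel p q B, ?_⟩
  ext i
  rw [twoLevel_mulVec hpq]
  dsimp only
  split_ifs with hip hiq
  · simpa [hip, hpq] using hp
  · simpa [hiq, hpq] using hq
  · simp [hip, hiq]

theorem reindex_mem_unitaryGroup [Fintype κ] [CommRing R] [StarRing R] (e : ι ≃ κ) {U : Matrix ι ι R}
    (hU : U ∈ unitaryGroup ι R) : reindex e e U ∈ unitaryGroup κ R := by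
  rw [mem_unitaryGroup_iff] at hU ⊢
  rw [reindex_apply, star_eq_conjTranspose, conjTranspose_submatrix, ← star_eq_conjTranspose,
    submatrix_mul_equiv, hU, submatrix_one_equiv]

theorem unitary_row_eq_of_col_eq [CommRing R] [StarRing R] {U : Matrix ι ι R}
    (hU : U ∈ unitaryGroup ι R) {c : ι} (hcol : ∀ i, U i c = (1 : Matrix ι ι R) i c) (j : ι) :
    U c j = (1 : Matrix ι ι R) c j := by
  have h := congrFun (congrFun (mem_unitaryGroup_iff'.mp hU) j) c
  rw [mul_apply, Finset.sum_eq_single c (fun k _ hk => by simp [hcol k, hk]) (by simp)] at h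
  simpa [hcol c, one_apply, eq_comm, apply_ite star] using congrArg star h

theorem eq_one_of_unitary_col_eq_single {U : Matrix ι ι ℂ} (hU : U ∈ unitaryGroup ι ℂ)
    {c : ι} {x : ℝ} (hx : 0 ≤ x) (hcol : (fun i => U i c) = Pi.single c (x : ℂ)) : x = 1 := by
  have h := congrFun (congrFun (mem_unitaryGroup_iff'.mp hU) c) c
  rw [mul_apply, Finset.sum_eq_single c (fun k _ hk => by simp [congrFun hcol k, hk]) (by simp)]
    at h
  simp only [star_apply, congrFun hcol c, Pi.single_eq_same, Complex.star_def,
    Complex.conj_ofReal, one_apply_eq] at h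
  norm_cast at h
  nlinarith

end TwoLevel

def oneOnInitial (R : Type*) [Semiring R] (N r : ℕ) : Submonoid (Matrix (Fin N) (Fin N) R) where
  carrier := {U | ∀ i j : Fin N, (i : ℕ) < r ∨ (j : ℕ) < r → U i j = (1 : Matrix _ _ R) i j}
  one_mem' _ _ _ := rfl
  mul_mem' {A B} hA hB i j h := by
    rcases h with hi | hj
    · calc (A * B) i j = ((1 : Matrix (Fin N) (Fin N) R) * B) i j := by
            simp only [mul_apply, hA i _ (Or.inl hi)]
        _ = _ := by rw [one_mul]; exact hB i j (Or.inl hi)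
    · calc (A * B) i j = (A * (1 : Matrix (Fin N) (Fin N) R)) i j := by
            simp only [mul_apply, hB _ j (Or.inr hj)]
        _ = _ := by rw [mul_one]; exact hA i j (Or.inr hj)

theorem star_mem_oneOnInitial {R : Type*} [Semiring R] [StarRing R] {r : ℕ}
    {U : Matrix (Fin N) (Fin N) R} (hU : U ∈ oneOnInitial R N r) :
    star U ∈ oneOnInitial R N r := by
  intro i j hr
  rw [star_apply, hU j i hr.symm]
  by_cases hij : i = j
  · subst hij; simp
  · simp [one_apply, hij, Ne.symm hij]

def adjacentTwoLevel (N r : ℕ) : Set (Matrix (Fin N) (Fin N) ℂ) :=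
  {G | G ∈ unitaryGroup (Fin N) ℂ ∧
    ∃ k, ∃ hk : k + 1 < N, r ≤ k ∧ IsTwoLevelOn G ⟨k, by omega⟩ ⟨k + 1, hk⟩}

section Adjacent

variable {N : ℕ}

theorem adjacentTwoLevel_subset_unitaryGroup (r : ℕ) :
    adjacentTwoLevel N r ⊆ unitaryGroup (Fin N) ℂ :=
  fun _ hG => hG.1

theorem adjacentTwoLevel_subset_oneOnInitial (r : ℕ) :
    adjacentTwoLevel N r ⊆ oneOnInitial ℂ N r := by
  rintro G ⟨-, k, hk, hrk, hG⟩ i j hij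
  rw [one_apply]
  refine hG i j ?_
  rcases hij with hi | hj
  · exact Or.inl ⟨fun h => by simp [h] at hi; omega, fun h => by simp [h] at hi; omega⟩
  · exact Or.inr ⟨fun h => by simp [h] at hj; omega, fun h => by simp [h] at hj; omega⟩

theorem adjacentTwoLevel_anti {r s : ℕ} (hrs : r ≤ s) :
    adjacentTwoLevel N s ⊆ adjacentTwoLevel N r := by
  rintro G ⟨hGu, k, hk, hsk, hG⟩
  exact ⟨hGu, k, hk, hrs.trans hsk, hG⟩

theorem exists_adjacentTwoLevel_mulVec_update_eq {r k : ℕ} (hrk : r ≤ k) (hk : k + 1 < N)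
    (v : Fin N → ℂ) : ∃ G ∈ adjacentTwoLevel N r, ∃ x : ℝ, 0 ≤ x ∧
      G *ᵥ Function.update (Function.update v ⟨k, by omega⟩ (x : ℂ)) ⟨k + 1, hk⟩ 0 = v := by
  obtain ⟨G, hGu, hG, hGv⟩ :=
    exists_twoLevel_mulVec_update_eq (p := ⟨k, by omega⟩) (q := ⟨k + 1, hk⟩)
      (by simp [Fin.ext_iff]) v
  exact ⟨G, ⟨hGu, k, hk, hrk, hG⟩, _, Real.sqrt_nonneg _, hGv⟩

-- The column is written as `P (x e_r)` rather than cleared by `P⁻¹`, so that the factors come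
-- out in the order of the final product and no inverse of a product is needed.
theorem exists_mem_adjacentTwoLevel_pow_mulVec_single {r m : ℕ} (hrm : r ≤ m) (hm : m + 1 < N)
    (v : Fin N → ℂ) (hv : ∀ i : Fin N, (i : ℕ) < r ∨ m + 1 < i → v i = 0) :
    ∃ P ∈ adjacentTwoLevel N r ^ (m + 1 - r), ∃ x : ℝ, 0 ≤ x ∧
      P *ᵥ Pi.single ⟨r, by omega⟩ (x : ℂ) = v := by
  induction m, hrm using Nat.le_induction generalizing v with
  | base =>
    obtain ⟨G, hG, x, hx, hGv⟩ := exists_adjacentTwoLevel_mulVec_update_eq le_rfl hm v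
    refine ⟨G, by simpa using hG, x, hx, ?_⟩
    convert hGv using 2
    ext i
    simp only [Function.update_apply, Pi.single_apply, Fin.ext_iff]
    split_ifs <;> first | rfl | omega | exact (hv i (by omega)).symm
  | succ m hrm ih =>
    obtain ⟨G, hG, y, -, hGv⟩ :=
      exists_adjacentTwoLevel_mulVec_update_eq (hrm.trans m.le_succ) hm v
    obtain ⟨P, hP, x, hx, hPx⟩ := ih (by omega)
        (Function.update (Function.update v ⟨m + 1, by omega⟩ (y : ℂ)) ⟨m + 1 + 1, hm⟩ 0)
        fun i hi => by
      simp only [Function.update_apply, Fin.ext_iff]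
      split_ifs <;> first | rfl | omega | exact hv i (by omega)
    refine ⟨G * P, ?_, x, hx, by rw [← mulVec_mulVec, hPx, hGv]⟩
    rw [show m + 1 + 1 - r = (m + 1 - r) + 1 by omega, pow_succ']
    exact Set.mul_mem_mul hG hP

theorem exists_mem_adjacentTwoLevel_pow_mul_mem_oneOnInitial {r : ℕ} (hr : r + 2 ≤ N)
    {U : Matrix (Fin N) (Fin N) ℂ} (hU : U ∈ unitaryGroup (Fin N) ℂ)
    (hUr : U ∈ oneOnInitial ℂ N r) :
    ∃ P ∈ adjacentTwoLevel N r ^ (N - 1 - r), ∃ V ∈ unitaryGroup (Fin N) ℂ,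
      V ∈ oneOnInitial ℂ N (r + 1) ∧ U = P * V := by
  set c : Fin N := ⟨r, by omega⟩
  obtain ⟨P, hP, x, hx, hPx⟩ := exists_mem_adjacentTwoLevel_pow_mulVec_single
    (show r ≤ N - 2 by omega) (by omega) (fun i => U i c) fun i hi => by
      rcases hi with hi | hi
      · rw [hUr i c (Or.inl hi), one_apply_ne (Fin.ne_of_val_ne (by simp [c]; omega))]
      · omega
  have hPu : P ∈ unitaryGroup (Fin N) ℂ :=
    Submonoid.pow_subset (adjacentTwoLevel_subset_unitaryGroup r) hP
  set V := star P * U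
  have hVu : V ∈ unitaryGroup (Fin N) ℂ := mul_mem (Unitary.star_mem hPu) hU
  have hVc : (fun i => V i c) = Pi.single c (x : ℂ) := by
    change star P *ᵥ (fun i => U i c) = _
    rw [← hPx, mulVec_mulVec, mem_unitaryGroup_iff'.mp hPu, one_mulVec]
  have hx1 : x = 1 := eq_one_of_unitary_col_eq_single hVu hx hVc
  have hVcol : ∀ i, V i c = (1 : Matrix (Fin N) (Fin N) ℂ) i c := by
    intro i
    rw [congrFun hVc i, hx1, Pi.single_apply, one_apply, Complex.ofReal_one]
  have hVr : V ∈ oneOnInitial ℂ N r := mul_mem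
    (star_mem_oneOnInitial (Submonoid.pow_subset (adjacentTwoLevel_subset_oneOnInitial r) hP)) hUr
  refine ⟨P, by rwa [show N - 1 - r = N - 2 + 1 - r by omega], V, hVu, fun i j hij => ?_, ?_⟩
  · rcases hij with hi | hj
    · rcases (Nat.lt_succ_iff_lt_or_eq.mp hi) with hi | hi
      · exact hVr i j (Or.inl hi)
      · rw [show i = c from Fin.ext hi]
        exact unitary_row_eq_of_col_eq hVu hVcol j
    · rcases (Nat.lt_succ_iff_lt_or_eq.mp hj) with hj | hj
      · exact hVr i j (Or.inr hj)
      · rw [show j = c from Fin.ext hj]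
        exact hVcol i
  · rw [← mul_assoc, mem_unitaryGroup_iff.mp hPu, one_mul]

theorem mem_adjacentTwoLevel_pow_of_mem_oneOnInitial {d : ℕ} (hd : 2 ≤ d) :
    ∀ r, r + d = N → ∀ U ∈ unitaryGroup (Fin N) ℂ, U ∈ oneOnInitial ℂ N r →
      U ∈ adjacentTwoLevel N r ^ (d * (d - 1) / 2) := by
  induction d, hd using Nat.le_induction with
  | base =>
    intro r hr U hU hUr
    rw [show 2 * (2 - 1) / 2 = 1 from rfl, pow_one]
    refine ⟨hU, r, by omega, le_rfl, fun i j hij => ?_⟩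
    rw [← one_apply]
    refine hUr i j ?_
    rcases hij with ⟨hi, hi'⟩ | ⟨hj, hj'⟩
    · left; have := i.isLt; simp [Fin.ext_iff] at hi hi'; omega
    · right; have := j.isLt; simp [Fin.ext_iff] at hj hj'; omega
  | succ d hd ih =>
    intro r hr U hU hUr
    obtain ⟨P, hP, V, hVu, hVr, rfl⟩ :=
      exists_mem_adjacentTwoLevel_pow_mul_mem_oneOnInitial (by omega) hU hUr
    have hV := Set.pow_subset_pow_left (adjacentTwoLevel_anti r.le_succ)
      (ih (r + 1) (by omega) V hVu hVr)
    rw [Nat.triangle_succ, add_comm, pow_add]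
    exact Set.mul_mem_mul (by rwa [show d = N - 1 - r by omega]) hV

theorem mem_adjacentTwoLevel_pow (hN : 2 ≤ N) {U : Matrix (Fin N) (Fin N) ℂ}
    (hU : U ∈ unitaryGroup (Fin N) ℂ) : U ∈ adjacentTwoLevel N 0 ^ (N * (N - 1) / 2) :=
  mem_adjacentTwoLevel_pow_of_mem_oneOnInitial hN 0 (zero_add N) U hU fun _ _ h => by omega

end Adjacent

/-- Every `2^n × 2^n` unitary matrix, with rows and columns indexed by length-`n`
binary strings, is a product of at most `N(N-1)/2` `Gₙ`-unitary matrices for a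
given Gray code `Gₙ = (X₁, …, X_N)`, `N = 2^n`.  Each factor differs from the
identity only in rows and columns indexed by two consecutive Gray code entries,
which differ in exactly one position. -/
theorem unitary_eq_prod_gray_unitary (n : ℕ) (hn : 1 ≤ n)
    (X : Fin (2 ^ n) → (Fin n → Bool)) (hbij : Function.Bijective X)
    (hadj : ∀ (k : ℕ) (hk : k + 1 < 2 ^ n),
      DiffersInOnePos (X ⟨k, by omega⟩) (X ⟨k + 1, hk⟩))
    (U : Matrix (Fin n → Bool) (Fin n → Bool) ℂ)
    (hU : U ∈ Matrix.unitaryGroup (Fin n → Bool) ℂ) :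
    ∃ (m : ℕ) (_ : m ≤ 2 ^ n * (2 ^ n - 1) / 2)
      (A : Fin m → Matrix (Fin n → Bool) (Fin n → Bool) ℂ),
      U = (List.ofFn A).prod ∧
      ∀ i, A i ∈ Matrix.unitaryGroup (Fin n → Bool) ℂ ∧
        ∃ (k : ℕ) (hk : k + 1 < 2 ^ n),
          IsTwoLevelOn (A i) (X ⟨k, by omega⟩) (X ⟨k + 1, hk⟩) ∧
          DiffersInOnePos (X ⟨k, by omega⟩) (X ⟨k + 1, hk⟩) := by
  have hN : 2 ≤ 2 ^ n := Nat.le_self_pow (by omega) 2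
  let e : Fin (2 ^ n) ≃ (Fin n → Bool) := Equiv.ofBijective X hbij
  let φ := reindexAlgEquiv ℂ ℂ e
  have hV := mem_adjacentTwoLevel_pow hN (reindex_mem_unitaryGroup e.symm hU)
  have hU' : U ∈ (φ '' adjacentTwoLevel (2 ^ n) 0) ^ (2 ^ n * (2 ^ n - 1) / 2) := by
    rw [← Set.image_pow]
    exact ⟨_, hV, by ext; simp [φ]⟩
  obtain ⟨A, hA⟩ := Set.mem_pow.mp hU'
  refine ⟨_, le_rfl, fun i => A i, hA.symm, fun i => ?_⟩
  obtain ⟨G, ⟨hGu, k, hk, -, hG⟩, hGA⟩ := (A i).2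
  dsimp only
  rw [← hGA]
  exact ⟨reindex_mem_unitaryGroup e hGu, k, hk, hG.reindex e, hadj k hk⟩
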